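/- arXiv:1501.01515 — 2 statements merged into one kernel-verified Lean document; each statement's English description precedes it below -/
import Mathlib

section
/- Let n ≥ 4 be an integer and let d₁, …, d_{n−3} be integers each at least 1, and set x = d₁ + ⋯ + d_{n−3}. Then n(n+1)/2 − Σ_{1≤i<j≤n−3} d_i d_j − (n+1)·x + x² > 0 (equivalently, n(n+1) − 2·Σ_{1≤i<j≤n−3} d_i d_j − 2(n+1)·x + 2x² > 0 as integers). -/
/-! Since `2 Σ_{i<j} d_i d_j = x² - Σ d_i²` and there are `n - 3` degrees, the quantity equals
`(x - n)² + Σ (d_i - 1)² + 3`. -/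

open Finset

theorem Finset.two_mul_sum_sum_Ioi_mul_add_sum_sq {ι R : Type*} [LinearOrder ι] [Fintype ι]
    [LocallyFiniteOrderTop ι] [LocallyFiniteOrderBot ι] [CommSemiring R] (f : ι → R) :
    2 * ∑ i, ∑ j ∈ Ioi i, f i * f j + ∑ i, f i ^ 2 = (∑ i, f i) ^ 2 := by
  have hoff := sum_sum_Ioi_add_eq_sum_sum_off_diag fun i j => f i * f j
  have hrow (i : ι) : ∑ j ∈ {i}ᶜ, f j * f i + f i ^ 2 = (∑ j, f j) * f i := by
    rw [sum_mul, ← sum_compl_add_sum {i}, sum_singleton, sq]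
  calc 2 * ∑ i, ∑ j ∈ Ioi i, f i * f j + ∑ i, f i ^ 2
      = ∑ i, (∑ j ∈ {i}ᶜ, f j * f i + f i ^ 2) := by
        rw [sum_add_distrib, ← hoff, mul_sum]
        simp only [mul_sum, mul_comm (f _) (f _), two_mul, sum_add_distrib]
    _ = (∑ i, f i) ^ 2 := by rw [sum_congr rfl fun i _ => hrow i, ← mul_sum, sq]

theorem Finset.two_mul_sum_le_sum_sq_add_card {ι R : Type*} [CommRing R] [LinearOrder R]
    [IsStrictOrderedRing R] (s : Finset ι) (f : ι → R) :
    2 * ∑ i ∈ s, f i ≤ ∑ i ∈ s, f i ^ 2 + #s := by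
  calc 2 * ∑ i ∈ s, f i = ∑ i ∈ s, 2 * f i := mul_sum _ _ _
    _ ≤ ∑ i ∈ s, (f i ^ 2 + 1) :=
        sum_le_sum fun i _ => by nlinarith [sq_nonneg (f i - 1)]
    _ = ∑ i ∈ s, f i ^ 2 + #s := by rw [sum_add_distrib, sum_const, nsmul_one]

theorem stmt_4_general (n : ℕ) (hn : 4 ≤ n) (d : Fin (n - 3) → ℤ)
    (x : ℤ) (hx : x = ∑ i, d i) :
    0 < (n : ℤ) * (n + 1) - 2 * (∑ i, ∑ j ∈ Ioi i, d i * d j)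
      - 2 * (n + 1) * x + 2 * x ^ 2 := by
  have hpairs := two_mul_sum_sum_Ioi_mul_add_sum_sq d
  have hsq := two_mul_sum_le_sum_sq_add_card univ d
  have hcard : ((#(univ : Finset (Fin (n - 3))) : ℕ) : ℤ) = n - 3 := by
    simp [Nat.cast_sub (by omega : 3 ≤ n)]
  rw [← hx] at hpairs hsq
  nlinarith [sq_nonneg (x - n)]

open Finset in
/-- Numerical core of Lemma 4.1: for `n ≥ 4` and degrees `d₁, …, d_{n-3} ≥ 1`
with `x = Σ d_j`, one has `n(n+1) - 2 Σ_{i<j} d_i d_j - 2(n+1)x + 2x² > 0`. -/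
theorem stmt_4 (n : ℕ) (hn : 4 ≤ n) (d : Fin (n - 3) → ℤ) (hd : ∀ i, 1 ≤ d i)
    (x : ℤ) (hx : x = ∑ i, d i) :
    0 < (n : ℤ) * (n + 1) - 2 * (∑ i, ∑ j ∈ Ioi i, d i * d j)
      - 2 * (n + 1) * x + 2 * x ^ 2 :=
  stmt_4_general n hn d x hx
end

section
/- Let ℤ[i] denote the Gaussian integers, acting on ℂ through the natural ring embedding ℤ[i] → ℂ, let Λ = ℤ[i]·1 be the ℤ[i]-submodule of ℂ generated by 1, and let T = ℂ/Λ be the quotient ℤ[i]-module. Consider the map x ↦ i·x on the set S = {x ∈ T³ : i·(i·x) = x} (which has 64 elements). Then the quotient of S by the equivalence relation identifying x with i·x has exactly 36 elements. -/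
/-!
Since `i² = -1`, the condition `i • i • x = x` says `2x = 0`, so `S` is the 2-torsion of `T³`.
The 2-torsion points of `T = ℂ/ℤ[i]` are the classes of `z/2` with `z ∈ ℤ[i]`, and `z/2 ≡ w/2`
exactly when `z ≡ w mod 2`, i.e. when the real and imaginary parts of `z` and `w` have the same
parities. Multiplication by `i` sends `a + bi` to `-b + ai`, so it swaps the two parities. Hence
`S` with the action of `i` is `((ℤ/2)²)³` with the coordinatewise swap, which has `2³ = 8`
fixed points and `(64 - 8)/2 = 28` orbits of size two.
-/

open GaussianInt

/-- `ℂ` as a `ℤ[i]`-module via the natural ring embedding `ℤ[i] → ℂ`. -/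
noncomputable instance : Module GaussianInt ℂ :=
  Module.compHom ℂ GaussianInt.toComplex

namespace Function.Involutive

variable {α : Type*} {σ : α → α}

def orbitSetoid (hσ : Involutive σ) : Setoid α where
  r x y := x = y ∨ σ x = y
  iseqv := by
    refine ⟨fun _ => .inl rfl, ?_, ?_⟩
    · rintro x y (rfl | rfl)
      exacts [.inl rfl, .inr (hσ x)]
    · rintro x y z (rfl | rfl) (rfl | rfl)
      exacts [.inl rfl, .inr rfl, .inr rfl, .inl (hσ x).symm]

instance [DecidableEq α] (hσ : Involutive σ) : DecidableRel hσ.orbitSetoid.r :=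
  fun x y => inferInstanceAs (Decidable (x = y ∨ σ x = y))

def quotEquivQuotientOrbitSetoid (hσ : Involutive σ) :
    Quot (fun x y : α => σ x = y) ≃ Quotient hσ.orbitSetoid where
  toFun := Quot.lift (Quotient.mk _) fun _ _ h => Quotient.sound (.inr h)
  invFun := Quotient.lift (Quot.mk _) <| by
    rintro x y (rfl | h)
    exacts [rfl, Quot.sound h]
  left_inv := by rintro ⟨x⟩; rfl
  right_inv := by rintro ⟨x⟩; rfl

end Function.Involutive

theorem involutive_comp_swap (ι α : Type*) :
    Function.Involutive fun x : ι → α × α => Prod.swap ∘ x :=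
  fun _ => rfl

theorem card_quot_comp_swap :
    Nat.card (Quot fun x y : Fin 3 → ZMod 2 × ZMod 2 => Prod.swap ∘ x = y) = 36 := by
  rw [Nat.card_congr (involutive_comp_swap _ _).quotEquivQuotientOrbitSetoid,
    Nat.card_eq_fintype_card]
  decide

namespace GaussianTorus

noncomputable abbrev lattice : Submodule GaussianInt ℂ := Submodule.span GaussianInt {1}

abbrev Torus := ℂ ⧸ lattice

theorem smul_complex_def (r : GaussianInt) (x : ℂ) : r • x = toComplex r * x := rfl

theorem toComplex_sqrtd : toComplex (Zsqrtd.sqrtd : GaussianInt) = Complex.I := by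
  simp [toComplex_def, Zsqrtd.sqrtd]

theorem mem_lattice_iff {w : ℂ} : w ∈ lattice ↔ ∃ z : GaussianInt, toComplex z = w := by
  simp only [Submodule.mem_span_singleton, smul_complex_def, mul_one]

noncomputable def halfPoint (z : GaussianInt) : Torus :=
  Submodule.Quotient.mk (toComplex z / 2)

theorem sqrtd_smul_halfPoint (z : GaussianInt) :
    (Zsqrtd.sqrtd : GaussianInt) • halfPoint z = halfPoint (Zsqrtd.sqrtd * z) := by
  rw [halfPoint, ← Submodule.Quotient.mk_smul, halfPoint, smul_complex_def, map_mul, mul_div_assoc]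

def parity (z : GaussianInt) : ZMod 2 × ZMod 2 := (z.re, z.im)

theorem parity_surjective : Function.Surjective parity := by
  rintro ⟨a, b⟩
  exact ⟨⟨a.cast, b.cast⟩, by simp [parity]⟩

theorem parity_sqrtd_mul (z : GaussianInt) : parity (Zsqrtd.sqrtd * z) = (parity z).swap := by
  simp [parity, Zsqrtd.sqrtd, ZMod.neg_eq_self_mod_two]

theorem two_dvd_iff_parity_eq_zero {z : GaussianInt} : 2 ∣ z ↔ parity z = 0 := by
  have h := Zsqrtd.intCast_dvd (d := -1) 2 z
  push_cast at h
  simp only [h, parity, Prod.mk_eq_zero, ZMod.intCast_zmod_eq_zero_iff_dvd, Nat.cast_ofNat]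

theorem halfPoint_eq_halfPoint_iff {z w : GaussianInt} :
    halfPoint z = halfPoint w ↔ parity z = parity w := by
  have hdiff : parity (z - w) = parity z - parity w := by simp [parity]
  rw [← sub_eq_zero (a := parity z), ← hdiff, ← two_dvd_iff_parity_eq_zero, halfPoint, halfPoint,
    Submodule.Quotient.eq, mem_lattice_iff]
  refine exists_congr fun u => ?_
  rw [eq_comm (b := 2 * u), ← toComplex_inj, map_mul, map_sub, map_ofNat]
  constructor <;> intro h
  · linear_combination 2 * h
  · linear_combination h / 2

noncomputable def twoTorsionPoint (p : ZMod 2 × ZMod 2) : Torus :=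
  halfPoint (Function.surjInv parity_surjective p)

theorem twoTorsionPoint_parity (z : GaussianInt) : twoTorsionPoint (parity z) = halfPoint z :=
  halfPoint_eq_halfPoint_iff.2 (Function.surjInv_eq parity_surjective _)

theorem twoTorsionPoint_injective : Function.Injective twoTorsionPoint := fun p q h => by
  rwa [twoTorsionPoint, twoTorsionPoint, halfPoint_eq_halfPoint_iff,
    Function.surjInv_eq parity_surjective, Function.surjInv_eq parity_surjective] at h

theorem sqrtd_smul_twoTorsionPoint (p : ZMod 2 × ZMod 2) :
    (Zsqrtd.sqrtd : GaussianInt) • twoTorsionPoint p = twoTorsionPoint p.swap := by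
  obtain ⟨z, rfl⟩ := parity_surjective p
  rw [twoTorsionPoint_parity, sqrtd_smul_halfPoint, ← parity_sqrtd_mul, twoTorsionPoint_parity]

theorem exists_twoTorsionPoint_eq_iff (t : Torus) :
    (∃ p, twoTorsionPoint p = t) ↔
      (Zsqrtd.sqrtd : GaussianInt) • (Zsqrtd.sqrtd : GaussianInt) • t = t := by
  constructor
  · rintro ⟨p, rfl⟩
    rw [sqrtd_smul_twoTorsionPoint, sqrtd_smul_twoTorsionPoint, Prod.swap_swap]
  · obtain ⟨w, rfl⟩ := Submodule.Quotient.mk_surjective lattice t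
    rw [← Submodule.Quotient.mk_smul, ← Submodule.Quotient.mk_smul, Submodule.Quotient.eq,
      mem_lattice_iff]
    rintro ⟨z, hz⟩
    refine ⟨parity (-z), ?_⟩
    rw [twoTorsionPoint_parity, halfPoint, map_neg, hz, smul_complex_def, smul_complex_def,
      toComplex_sqrtd]
    congr 1
    linear_combination (-w / 2) * Complex.I_sq

noncomputable def twoTorsionEquiv (ι : Type*) :
    (ι → ZMod 2 × ZMod 2) ≃
      {x : ι → Torus // (Zsqrtd.sqrtd : GaussianInt) • (Zsqrtd.sqrtd : GaussianInt) • x = x} :=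
  Equiv.ofBijective
    (fun m => ⟨twoTorsionPoint ∘ m, funext fun j => by
      simp only [Pi.smul_apply, Function.comp_apply, sqrtd_smul_twoTorsionPoint, Prod.swap_swap]⟩)
    ⟨fun _ _ h => twoTorsionPoint_injective.comp_left (congrArg Subtype.val h), by
      rintro ⟨x, hx⟩
      choose m hm using fun j => (exists_twoTorsionPoint_eq_iff (x j)).2 (congrFun hx j)
      exact ⟨m, Subtype.ext (funext hm)⟩⟩

theorem sqrtd_smul_twoTorsionEquiv {ι : Type*} (m : ι → ZMod 2 × ZMod 2) :
    (Zsqrtd.sqrtd : GaussianInt) • (twoTorsionEquiv ι m).val =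
      (twoTorsionEquiv ι (Prod.swap ∘ m)).val :=
  funext fun j => sqrtd_smul_twoTorsionPoint (m j)

theorem swap_comp_eq_iff_sqrtd_smul_twoTorsionEquiv {ι : Type*} (m m' : ι → ZMod 2 × ZMod 2) :
    Prod.swap ∘ m = m' ↔
      (Zsqrtd.sqrtd : GaussianInt) • (twoTorsionEquiv ι m).val = (twoTorsionEquiv ι m').val := by
  rw [sqrtd_smul_twoTorsionEquiv, Subtype.coe_inj, Equiv.apply_eq_iff_eq]

end GaussianTorus

/-- Steps 1–2 of Theorem 5.1: the quotient of the `64`-element set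
`S = {x ∈ T³ : i·(i·x) = x}` by the equivalence relation identifying `x`
with `i·x` has exactly `36` elements. -/
theorem stmt_11 :
    Nat.card (Quot (fun x y :
        {x : Fin 3 → ℂ ⧸ (Submodule.span GaussianInt ({1} : Set ℂ)) //
          (Zsqrtd.sqrtd : GaussianInt) • ((Zsqrtd.sqrtd : GaussianInt) • x) = x} =>
        (Zsqrtd.sqrtd : GaussianInt) • x.val = y.val)) = 36 := by
  rw [← Nat.card_congr (Quot.congr _ GaussianTorus.swap_comp_eq_iff_sqrtd_smul_twoTorsionEquiv),
    card_quot_comp_swap]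
end
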